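/- Consider the composite problem minimize φ = f + g under the standing assumptions. If the iterates are generated by adaPGM, then the sequence (x^k) converges to a point in argmin φ. More generally, if the stepsizes γ_k > 0 satisfy γ_{k+1} ≤ γ_k · min{ √(1 + γ_k/γ_{k-1}), 1/(2√([δ_k]₊)) } for all k, inf_k γ_k > 0, and x^{k+1} = prox_{γ_{k+1}g}(x^k − γ_{k+1}∇f(x^k)), then (x^k) converges to a point in argmin φ. -/

import Mathlib

open scoped RealInnerProductSpace
open Filter

noncomputable section

/-- Euclidean space `ℝⁿ`. -/
abbrev En (n : ℕ) := EuclideanSpace ℝ (Fin n)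

/-- Local Lipschitz-type estimate `ℓ = ⟨∇f(a) − ∇f(b), a − b⟩ / ‖a − b‖²`
(Lean's division by zero implements the `0/0 = 0` convention). -/
noncomputable def lEst {n : ℕ} (f' : En n → En n) (a b : En n) : ℝ :=
  ⟪f' a - f' b, a - b⟫ / ‖a - b‖ ^ 2

/-- Local (inverse) cocoercivity estimate `c = ‖∇f(a) − ∇f(b)‖² / ⟨∇f(a) − ∇f(b), a − b⟩`
(convention `0/0 = 0`). -/
noncomputable def cEst {n : ℕ} (f' : En n → En n) (a b : En n) : ℝ :=
  ‖f' a - f' b‖ ^ 2 / ⟪f' a - f' b, a - b⟫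

/-- `δ = γ ℓ (γ c − 1)`. -/
noncomputable def deltaEst {n : ℕ} (γ : ℝ) (f' : En n → En n) (a b : En n) : ℝ :=
  γ * lEst f' a b * (γ * cEst f' a b - 1)

/-- `g` is proper, lower semicontinuous and convex (extended-real-valued). -/
def ProperLscConvex {n : ℕ} (g : En n → EReal) : Prop :=
  (∀ x, g x ≠ ⊥) ∧ (∃ x, g x ≠ ⊤) ∧ LowerSemicontinuous g ∧
    ∀ x y : En n, ∀ a b : ℝ, 0 ≤ a → 0 ≤ b → a + b = 1 →
      g (a • x + b • y) ≤ (a : EReal) * g x + (b : EReal) * g y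

/-- `p = prox_{γ g}(u)`, characterized as minimality of `w ↦ g w + ‖w − u‖²/(2γ)`. -/
def IsProx {n : ℕ} (γ : ℝ) (g : En n → EReal) (u p : En n) : Prop :=
  ∀ w, g p + ((‖p - u‖ ^ 2 / (2 * γ) : ℝ) : EReal) ≤ g w + ((‖w - u‖ ^ 2 / (2 * γ) : ℝ) : EReal)

/-- Real value of `φ = f + g` (equals `f z + g z` whenever `g z` is finite). -/
noncomputable def phiR {n : ℕ} (f : En n → ℝ) (g : En n → EReal) (z : En n) : ℝ :=
  f z + (g z).toReal

/-- `P = φ(z) − φ(x*)` (real-valued). -/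
noncomputable def Pval {n : ℕ} (f : En n → ℝ) (g : En n → EReal) (xs z : En n) : ℝ :=
  phiR f g z - phiR f g xs

/-- adaPGM stepsize factor: `min{√(1+ρ), 1/(2√([δ]₊))}` with the convention `1/0 = +∞`
(so the second term is inactive when `[δ]₊ = 0`). -/
noncomputable def adaStep (ρ δ : ℝ) : ℝ :=
  if δ ≤ 0 then Real.sqrt (1 + ρ) else min (Real.sqrt (1 + ρ)) (1 / (2 * Real.sqrt δ))

/-- Malitsky–Mishchenko stepsize: `min{γ√(1+γ/γ'), 1/(2L)}` with the convention `1/0 = +∞`. -/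
noncomputable def mmStep (γprev γ L : ℝ) : ℝ :=
  if L = 0 then γ * Real.sqrt (1 + γ / γprev)
  else min (γ * Real.sqrt (1 + γ / γprev)) (1 / (2 * L))

/-- Lyapunov function `U_k = ½‖x^k − x*‖² + ¼‖x^k − x^{k-1}‖² + γ_k(1+ρ_k)P_{k-1}`,
with the Lean index shifted by one (Lean `x (k+1)` is the paper `x^k`). -/
noncomputable def Ufun {n : ℕ} (f : En n → ℝ) (g : En n → EReal) (xs : En n)
    (x : ℕ → En n) (γ : ℕ → ℝ) (k : ℕ) : ℝ :=
  1/2 * ‖x (k+1) - xs‖ ^ 2 + 1/4 * ‖x (k+1) - x k‖ ^ 2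
    + γ (k+1) * (1 + γ (k+1) / γ k) * Pval f g xs (x k)

/-!
For every minimizer `x⋆`, the Lyapunov function
`U_k = ½‖x^k - x⋆‖² + ¼‖x^k - x^{k-1}‖² + γ_k (1 + γ_k/γ_{k-1}) (φ(x^{k-1}) - φ⋆)`
decreases by at least `¼‖x^{k+1} - x^k‖²`: once the prox optimality conditions of two
consecutive steps are added to the gradient inequality of `f`, the two halves of the stepsize
rule, `γ_{k+1}² ≤ γ_k² (1 + γ_k/γ_{k-1})` and `γ_{k+1}² δ_k ≤ γ_k²/4`, are exactly what is needed
to absorb the cross terms. A companion telescoping estimate makes `∑ γ_k (φ(x^k) - φ⋆)` finite, so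
`φ(x^k) → φ⋆` once the stepsizes are bounded below. The iterates are bounded; a cluster point is a
minimizer by lower semicontinuity, and anchoring `U` there, monotonicity forces `U_k → 0`, i.e.
`x^k` converges. For adaPGM itself, `∇f` is Lipschitz (constant `L`) on the bounded set of
iterates, so `δ_k ≤ γ_k² L²` and the rule keeps `γ_k ≥ min {γ_{-1}, 1/(2L)}`.
-/

open Topology

section Convex

variable {E : Type*} [NormedAddCommGroup E] [InnerProductSpace ℝ E] [CompleteSpace E]
  {f : E → ℝ} {f' : E → E}

theorem ConvexOn.add_inner_le_of_hasGradientAt (hconv : ConvexOn ℝ Set.univ f)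
    (hgrad : ∀ z, HasGradientAt f (f' z) z) (x y : E) : f x + ⟪f' x, y - x⟫ ≤ f y := by
  have hline : HasDerivAt (f ∘ AffineMap.lineMap (k := ℝ) x y) ⟪f' x, y - x⟫ 0 := by
    have hfx := hasGradientAt_iff_hasFDerivAt.1 (hgrad x)
    rw [← AffineMap.lineMap_apply_zero (k := ℝ) x y] at hfx
    simpa using hfx.comp_hasDerivAt (0 : ℝ) AffineMap.hasDerivAt_lineMap
  have := (hconv.comp_affineMap (AffineMap.lineMap x y)).le_slope_of_hasDerivAt
    (Set.mem_univ _) (Set.mem_univ _) zero_lt_one hline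
  simp only [slope_def_field, Function.comp_apply, AffineMap.lineMap_apply_one,
    AffineMap.lineMap_apply_zero, sub_zero, div_one] at this
  linarith

theorem ConvexOn.inner_sub_gradient_nonneg (hconv : ConvexOn ℝ Set.univ f)
    (hgrad : ∀ z, HasGradientAt f (f' z) z) (a b : E) : 0 ≤ ⟪f' a - f' b, a - b⟫ := by
  have hab := hconv.add_inner_le_of_hasGradientAt hgrad a b
  have hba := hconv.add_inner_le_of_hasGradientAt hgrad b a
  rw [← neg_sub a b, inner_neg_right] at hab
  rw [inner_sub_left]
  linarith

theorem ConvexOn.gradient_eq_of_inner_sub_eq_zero (hconv : ConvexOn ℝ Set.univ f)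
    (hgrad : ∀ z, HasGradientAt f (f' z) z) {a b : E} (h : ⟪f' a - f' b, a - b⟫ = 0) :
    f' a = f' b := by
  -- `f' b` is then also a subgradient at `a`, so `a` minimizes `f - ⟪f' b, ·⟫`.
  have hmin : IsLocalMin (fun y => f y - ⟪f' b, y⟫) a := by
    refine Filter.Eventually.of_forall fun y => ?_
    have hab := hconv.add_inner_le_of_hasGradientAt hgrad a b
    have hby := hconv.add_inner_le_of_hasGradientAt hgrad b y
    simp only [inner_sub_left, inner_sub_right] at h hab hby ⊢
    linarith
  have hderiv := (hasGradientAt_iff_hasFDerivAt.1 (hgrad a)).sub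
    ((innerSL ℝ (f' b)).hasFDerivAt (x := a))
  have h0 := congrArg (· (f' a - f' b)) (hmin.hasFDerivAt_eq_zero hderiv)
  simp only [sub_apply, InnerProductSpace.toDual_apply_apply,
    innerSL_apply_apply, zero_apply, ← inner_sub_left] at h0
  exact sub_eq_zero.1 (inner_self_eq_zero.1 h0)

end Convex

section Stepsize

theorem adaStep_le_sqrt (ρ δ : ℝ) : adaStep ρ δ ≤ √(1 + ρ) := by
  unfold adaStep
  split_ifs
  exacts [le_rfl, min_le_left _ _]

theorem adaStep_sq_mul_le (ρ δ : ℝ) : adaStep ρ δ ^ 2 * δ ≤ 1 / 4 := by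
  unfold adaStep
  split_ifs with hδ
  · nlinarith [sq_nonneg √(1 + ρ)]
  · push Not at hδ
    have hle : min √(1 + ρ) (1 / (2 * √δ)) ^ 2 ≤ (1 / (2 * √δ)) ^ 2 :=
      pow_le_pow_left₀ (by positivity) (min_le_right _ _) 2
    calc min √(1 + ρ) (1 / (2 * √δ)) ^ 2 * δ ≤ (1 / (2 * √δ)) ^ 2 * δ := by gcongr
      _ = 1 / 4 := by field_simp; rw [Real.sq_sqrt hδ.le]; ring

theorem adaStep_pos {ρ : ℝ} (hρ : -1 < ρ) (δ : ℝ) : 0 < adaStep ρ δ := by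
  have : 0 < √(1 + ρ) := Real.sqrt_pos.2 (by linarith)
  unfold adaStep
  split_ifs with hδ
  · exact this
  · exact lt_min this (by push Not at hδ; positivity)

theorem min_le_mul_adaStep {ρ δ γ K : ℝ} (hρ : 0 ≤ ρ) (hγ : 0 < γ) (hK : 0 < K)
    (hδ : δ ≤ γ ^ 2 * K ^ 2) : min γ (1 / (2 * K)) ≤ γ * adaStep ρ δ := by
  have hsqrt : γ ≤ γ * √(1 + ρ) :=
    le_mul_of_one_le_right hγ.le (Real.one_le_sqrt.2 (by linarith))
  unfold adaStep
  split_ifs with hδ0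
  · exact (min_le_left _ _).trans hsqrt
  · push Not at hδ0
    have hsqrtδ : √δ ≤ γ * K := Real.sqrt_le_iff.2 ⟨by positivity, by linarith⟩
    have : 1 / (2 * K) ≤ γ * (1 / (2 * √δ)) := by
      rw [mul_one_div, div_le_div_iff₀ (by positivity) (by positivity)]
      nlinarith
    rw [mul_min_of_nonneg _ _ hγ.le]
    exact le_min ((min_le_left _ _).trans hsqrt) ((min_le_right _ _).trans this)

theorem sq_le_of_le_mul_adaStep {γc γn ρ δ : ℝ} (hγc : 0 ≤ γc) (hγn : 0 ≤ γn) (hρ : -1 ≤ ρ)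
    (h : γn ≤ γc * adaStep ρ δ) : γn ^ 2 ≤ γc ^ 2 * (1 + ρ) := by
  have := pow_le_pow_left₀ hγn (h.trans (mul_le_mul_of_nonneg_left (adaStep_le_sqrt ρ δ) hγc)) 2
  rwa [mul_pow, Real.sq_sqrt (by linarith)] at this

theorem sq_mul_le_of_le_mul_adaStep {γc γn ρ δ : ℝ} (hγn : 0 ≤ γn)
    (h : γn ≤ γc * adaStep ρ δ) : γn ^ 2 * δ ≤ γc ^ 2 / 4 := by
  rcases le_or_gt δ 0 with hδ | hδ
  · nlinarith [sq_nonneg γc, sq_nonneg γn]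
  · have hsq : γn ^ 2 ≤ γc ^ 2 * adaStep ρ δ ^ 2 := by
      rw [← mul_pow]; exact pow_le_pow_left₀ hγn h 2
    nlinarith [adaStep_sq_mul_le ρ δ]

theorem div_le_max_of_le_mul_adaStep {γ : ℕ → ℝ} (hγ : ∀ k, 0 < γ k) {δ : ℕ → ℝ}
    (hrule : ∀ k, γ (k+2) ≤ γ (k+1) * adaStep (γ (k+1) / γ k) (δ k)) (k : ℕ) :
    γ (k+1) / γ k ≤ max (γ 1 / γ 0) 2 := by
  induction k with
  | zero => exact le_max_left _ _
  | succ k ih =>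
    set M := max (γ 1 / γ 0) 2
    have hM : 2 ≤ M := le_max_right _ _
    have hsqrt : √(1 + γ (k+1) / γ k) ≤ M :=
      Real.sqrt_le_iff.2 ⟨by linarith, by nlinarith⟩
    rw [div_le_iff₀ (hγ (k+1)), mul_comm]
    exact (hrule k).trans (mul_le_mul_of_nonneg_left ((adaStep_le_sqrt _ _).trans hsqrt)
      (hγ (k+1)).le)

end Stepsize

section Estimates

variable {n : ℕ} {f' : En n → En n} {a b : En n}

theorem deltaEst_of_inner_eq_zero (γ : ℝ) (h : ⟪f' a - f' b, a - b⟫ = 0) :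
    deltaEst γ f' a b = 0 := by
  simp [deltaEst, lEst, h]

theorem deltaEst_eq_of_inner_pos (γ : ℝ) (h : 0 < ⟪f' a - f' b, a - b⟫) :
    deltaEst γ f' a b
      = γ * (γ * ‖f' a - f' b‖ ^ 2 - ⟪f' a - f' b, a - b⟫) / ‖a - b‖ ^ 2 := by
  have hab : a - b ≠ 0 := fun h0 => by simp [h0] at h
  have : ‖a - b‖ ≠ 0 := norm_ne_zero_iff.2 hab
  unfold deltaEst lEst cEst
  field_simp

theorem deltaEst_le_of_norm_le {γ K : ℝ} (hγ : 0 ≤ γ) (hI : 0 ≤ ⟪f' a - f' b, a - b⟫)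
    (hL : ‖f' a - f' b‖ ≤ K * ‖a - b‖) : deltaEst γ f' a b ≤ γ ^ 2 * K ^ 2 := by
  rcases hI.eq_or_lt with hI0 | hIpos
  · rw [deltaEst_of_inner_eq_zero γ hI0.symm]; positivity
  rw [deltaEst_eq_of_inner_pos γ hIpos]
  have hT : 0 < ‖a - b‖ ^ 2 := by
    have : a - b ≠ 0 := fun h0 => by simp [h0] at hIpos
    positivity
  have hN : ‖f' a - f' b‖ ^ 2 ≤ K ^ 2 * ‖a - b‖ ^ 2 := by
    rw [← mul_pow]; exact pow_le_pow_left₀ (norm_nonneg _) hL 2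
  rw [div_le_iff₀ hT]
  nlinarith [mul_nonneg hγ hI]

theorem ConvexOn.inner_bound_of_sq_mul_deltaEst_le {f : En n → ℝ}
    (hconv : ConvexOn ℝ Set.univ f) (hgrad : ∀ z, HasGradientAt f (f' z) z)
    {γc γn : ℝ} (hγc : 0 < γc) (h : γn ^ 2 * deltaEst γc f' a b ≤ γc ^ 2 / 4) :
    γn ^ 2 * (γc * ‖f' a - f' b‖ ^ 2 - ⟪f' a - f' b, a - b⟫) ≤ γc * ‖a - b‖ ^ 2 / 4 := by
  rcases (hconv.inner_sub_gradient_nonneg hgrad a b).eq_or_lt with hI0 | hIpos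
  · rw [hconv.gradient_eq_of_inner_sub_eq_zero hgrad hI0.symm]
    simp
    positivity
  rw [deltaEst_eq_of_inner_pos γc hIpos] at h
  have hT : 0 < ‖a - b‖ ^ 2 := by
    have : a - b ≠ 0 := fun h0 => by simp [h0] at hIpos
    positivity
  rw [mul_div_assoc', div_le_iff₀ hT] at h
  nlinarith

end Estimates

section Limits

theorem summable_of_add_le {u v : ℕ → ℝ} (hu : ∀ k, 0 ≤ u k) (hv : ∀ k, 0 ≤ v k)
    (h : ∀ k, u (k+1) + v k ≤ u k) : Summable v := by
  refine summable_of_sum_range_le hv (c := u 0) fun N => ?_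
  have : ∀ N, ∑ k ∈ Finset.range N, v k + u N ≤ u 0 := by
    intro N
    induction N with
    | zero => simp
    | succ N ih => rw [Finset.sum_range_succ]; linarith [h N]
  linarith [this N, hu N]

theorem le_of_forall_le_add_mul {a b c : ℝ} (h : ∀ τ ∈ Set.Ioc (0 : ℝ) 1, a ≤ b + τ * c) :
    a ≤ b := by
  have hcont : Continuous fun τ : ℝ => b + τ * c := by fun_prop
  have hlim : Tendsto (fun τ : ℝ => b + τ * c) (𝓝[>] 0) (𝓝 b) := by
    simpa using (hcont.tendsto 0).mono_left nhdsWithin_le_nhds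
  exact ge_of_tendsto hlim (Filter.mem_of_superset (Ioc_mem_nhdsGT zero_lt_one) h)

theorem LowerSemicontinuous.le_of_tendsto {α β ι : Type*} [TopologicalSpace α]
    [TopologicalSpace β] [LinearOrder β] [OrderTopology β] [DenselyOrdered β]
    {Φ : α → β} (hΦ : LowerSemicontinuous Φ) {l : Filter ι} [l.NeBot] {u : ι → α} {a : α}
    {c : β} (hu : Tendsto u l (𝓝 a)) (hc : Tendsto (Φ ∘ u) l (𝓝 c)) : Φ a ≤ c :=
  le_of_forall_lt_imp_le_of_dense fun _ hb =>
    ge_of_tendsto hc ((hu.eventually (hΦ a _ hb)).mono fun _ h => h.le)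

end Limits

section Prox

variable {n : ℕ} {f : En n → ℝ} {g : En n → EReal}

def IsMinimizer (f : En n → ℝ) (g : En n → EReal) (z : En n) : Prop :=
  ∀ w, (f z : EReal) + g z ≤ (f w : EReal) + g w

theorem ProperLscConvex.coe_toReal (hg : ProperLscConvex g) {z : En n} (hz : g z ≠ ⊤) :
    ((g z).toReal : EReal) = g z :=
  EReal.coe_toReal hz (hg.1 z)

theorem IsProx.ne_top (hg : ProperLscConvex g) {γ : ℝ} {u p : En n} (hp : IsProx γ g u p) :
    g p ≠ ⊤ := by
  obtain ⟨w, hw⟩ := hg.2.1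
  intro htop
  have := hp w
  rw [htop, EReal.top_add_coe, top_le_iff] at this
  exact EReal.add_ne_top hw (EReal.coe_ne_top _) this

theorem IsMinimizer.ne_top (hg : ProperLscConvex g) {z : En n} (hz : IsMinimizer f g z) :
    g z ≠ ⊤ := by
  obtain ⟨w, hw⟩ := hg.2.1
  intro htop
  have := hz w
  rw [htop, EReal.coe_add_top, top_le_iff] at this
  exact EReal.add_ne_top (EReal.coe_ne_top _) hw this

theorem coe_phiR (hg : ProperLscConvex g) {z : En n} (hz : g z ≠ ⊤) :
    (phiR f g z : EReal) = f z + g z := by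
  rw [phiR, EReal.coe_add, hg.coe_toReal hz]

theorem IsMinimizer.Pval_nonneg (hg : ProperLscConvex g) {z : En n} (hz : IsMinimizer f g z)
    {w : En n} (hw : g w ≠ ⊤) : 0 ≤ Pval f g z w := by
  have := hz w
  rw [← coe_phiR hg (hz.ne_top hg), ← coe_phiR hg hw, EReal.coe_le_coe_iff] at this
  unfold Pval
  linarith

/-- The optimality condition of the proximal point: `(u - p) / γ` is a subgradient of `g`
at `p`. -/
theorem IsProx.inner_le (hg : ProperLscConvex g) {γ : ℝ} (hγ : 0 < γ) {u p w : En n}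
    (hp : IsProx γ g u p) (hw : g w ≠ ⊤) :
    γ * (g p).toReal + ⟪u - p, w - p⟫ ≤ γ * (g w).toReal := by
  set G := fun z => (g z).toReal
  -- compare `p` with the points `p + τ (w - p)` of the segment towards `w`
  have hseg : ∀ τ ∈ Set.Ioc (0 : ℝ) 1,
      γ * (G p - G w) ≤ ⟪p - u, w - p⟫ + τ * (‖w - p‖ ^ 2 / 2) := by
    rintro τ ⟨hτ0, hτ1⟩
    have hconvex := hg.2.2.2 w p τ (1 - τ) hτ0.le (by linarith) (by ring)
    have hmin := hp (τ • w + (1 - τ) • p)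
    rw [← hg.coe_toReal hw, ← hg.coe_toReal (hp.ne_top hg)] at hconvex
    rw [← hg.coe_toReal (hp.ne_top hg)] at hmin
    have hreal : G p + ‖p - u‖ ^ 2 / (2 * γ)
        ≤ τ * G w + (1 - τ) * G p + ‖τ • w + (1 - τ) • p - u‖ ^ 2 / (2 * γ) := by
      have := hmin.trans (add_le_add_left hconvex _)
      exact_mod_cast this
    have hexpand : ‖τ • w + (1 - τ) • p - u‖ ^ 2
        = ‖p - u‖ ^ 2 + 2 * τ * ⟪p - u, w - p⟫ + τ ^ 2 * ‖w - p‖ ^ 2 := by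
      rw [show τ • w + (1 - τ) • p - u = (p - u) + τ • (w - p) by module,
        norm_add_sq_real, inner_smul_right, norm_smul, Real.norm_of_nonneg hτ0.le]
      ring
    rw [hexpand] at hreal
    have : τ * (γ * (G p - G w)) ≤ τ * (⟪p - u, w - p⟫ + τ * (‖w - p‖ ^ 2 / 2)) := by
      rw [← sub_nonneg] at hreal ⊢
      have := mul_nonneg hreal (by positivity : (0 : ℝ) ≤ 2 * γ)
      field_simp at this
      nlinarith
    exact le_of_mul_le_mul_left this hτ0
  have := le_of_forall_le_add_mul hseg
  rw [← neg_sub p u, inner_neg_left]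
  linarith

theorem isMinimizer_of_tendsto (hg : ProperLscConvex g) (hf : Continuous f) {z : En n}
    (hz : IsMinimizer f g z) {y : ℕ → En n} {a : En n} (hy : ∀ k, g (y k) ≠ ⊤)
    (hlim : Tendsto y atTop (𝓝 a)) (hP : Tendsto (fun k => Pval f g z (y k)) atTop (𝓝 0)) :
    IsMinimizer f g a := by
  have hΦ : LowerSemicontinuous fun w => (f w : EReal) + g w :=
    (continuous_coe_real_ereal.comp hf).lowerSemicontinuous.add' hg.2.2.1
      fun w => EReal.continuousAt_add (Or.inl (EReal.coe_ne_top _)) (Or.inl (EReal.coe_ne_bot _))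
  have hvals : Tendsto (fun k => (f (y k) : EReal) + g (y k)) atTop (𝓝 ((f z : EReal) + g z)) := by
    have : ∀ k, (f (y k) : EReal) + g (y k) = ((Pval f g z (y k) + phiR f g z : ℝ) : EReal) := by
      intro k
      rw [← coe_phiR hg (hy k), Pval, sub_add_cancel]
    simp_rw [this, ← coe_phiR hg (hz.ne_top hg)]
    exact continuous_coe_real_ereal.continuousAt.tendsto.comp (by simpa using hP.add_const _)
  exact fun w => (hΦ.le_of_tendsto hlim hvals).trans (hz w)

end Prox

section Descent

variable {E : Type*} [NormedAddCommGroup E] [InnerProductSpace ℝ E]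

theorem norm_le_of_sq_le_inner {u w : E} (h : ‖u‖ ^ 2 ≤ ⟪w, u⟫) : ‖u‖ ≤ ‖w‖ := by
  have hcs := real_inner_le_norm w u
  rcases (norm_nonneg u).eq_or_lt with hu | hu
  · rw [← hu]; exact norm_nonneg w
  · nlinarith

theorem pgStep_inequalities {F G : E → ℝ} {F' : E → E} {s : Set E}
    (hF : ∀ x y, F x + ⟪F' x, y - x⟫ ≤ F y) {γc γn : ℝ} (hγc : 0 < γc) (hγn : 0 < γn)
    {xp xc xn z w : E}
    (hc : ∀ y ∈ s, γc * G xc + ⟪xp - γc • F' xp - xc, y - xc⟫ ≤ γc * G y)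
    (hn : ∀ y ∈ s, γn * G xn + ⟪xc - γn • F' xc - xn, y - xn⟫ ≤ γn * G y)
    (hxp : xp ∈ s) (hxc : xc ∈ s) (hxn : xn ∈ s) (hz : z ∈ s)
    (hw : w = (γn / γc) • (xc - xp) + γn • (F' xp - F' xc)) :
    γn * (F xc + G xc - (F z + G z)) + ⟪xn - xc, xn - z⟫ ≤ ⟪w, xn - xc⟫ ∧
    γn * (F xc + G xc) + ⟪w, xc - xp⟫ ≤ γn * (F xp + G xp) ∧
    ‖xn - xc‖ ^ 2 ≤ ⟪w, xn - xc⟫ := by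
  have hc' : ∀ y ∈ s,
      γn * G xc + ⟪(γn / γc) • (xp - xc) - γn • F' xp, y - xc⟫ ≤ γn * G y := by
    intro y hy
    have h := mul_le_mul_of_nonneg_left (hc y hy) (div_nonneg hγn.le hγc.le)
    have hv : (γn / γc) • (xp - γc • F' xp - xc) = (γn / γc) • (xp - xc) - γn • F' xp := by
      rw [smul_sub, smul_sub, smul_sub, smul_smul, div_mul_cancel₀ _ hγc.ne']; abel
    rwa [mul_add, ← mul_assoc, div_mul_cancel₀ _ hγc.ne', ← real_inner_smul_left, hv,
      ← mul_assoc, div_mul_cancel₀ _ hγc.ne'] at h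
  have h1 := hn z hz
  have h2 := hc' xn hxn
  have h3 := hc' xp hxp
  have h4 := hn xc hxc
  have h5 := mul_le_mul_of_nonneg_left (hF xc z) hγn.le
  have h6 := mul_le_mul_of_nonneg_left (hF xc xp) hγn.le
  subst hw
  simp only [inner_add_left, inner_sub_left, inner_sub_right, real_inner_smul_left,
    ← real_inner_self_eq_norm_sq] at h1 h2 h3 h4 h5 h6 ⊢
  refine ⟨by linarith, by linarith, by linarith⟩

theorem norm_sq_sub_inner_le {a b Δ : E} {γc γn : ℝ} (hγc : 0 < γc)
    (h : γn ^ 2 * (γc * ‖Δ‖ ^ 2 - ⟪Δ, a - b⟫) ≤ γc * ‖a - b‖ ^ 2 / 4) :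
    ‖(γn / γc) • (b - a) + γn • Δ‖ ^ 2 - γn / γc * ⟪(γn / γc) • (b - a) + γn • Δ, b - a⟫
      ≤ ‖b - a‖ ^ 2 / 4 := by
  rw [← neg_sub b a, inner_neg_right, norm_neg] at h
  set d := b - a
  have hexp : ‖(γn / γc) • d + γn • Δ‖ ^ 2 - γn / γc * ⟪(γn / γc) • d + γn • Δ, d⟫
      = γn ^ 2 / γc * (γc * ‖Δ‖ ^ 2 + ⟪Δ, d⟫) := by
    simp only [norm_add_sq_real, norm_smul, inner_add_left, real_inner_smul_left,
      real_inner_smul_right, real_inner_self_eq_norm_sq, real_inner_comm d Δ, Real.norm_eq_abs,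
      mul_pow, sq_abs]
    field_simp
    ring
  rw [hexp, div_mul_eq_mul_div, div_le_iff₀ hγc]
  linarith

theorem lyapunov_descent {xs xp xc xn w : E} {γp γc γn Pp Pc : ℝ}
    (hγc : 0 < γc) (hγn : 0 < γn) (hPp : 0 ≤ Pp)
    (hthree : γn * Pc + ⟪xn - xc, xn - xs⟫ ≤ ⟪w, xn - xc⟫)
    (hdesc : γn * Pc + ⟪w, xc - xp⟫ ≤ γn * Pp)
    (hmono : ‖xn - xc‖ ^ 2 ≤ ⟪w, xn - xc⟫)
    (hw : ‖w‖ ^ 2 - γn / γc * ⟪w, xc - xp⟫ ≤ ‖xc - xp‖ ^ 2 / 4)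
    (hstep : γn ^ 2 ≤ γc ^ 2 * (1 + γc / γp)) :
    (1/2 * ‖xn - xs‖ ^ 2 + 1/4 * ‖xn - xc‖ ^ 2 + γn * (1 + γn / γc) * Pc)
        + 1/4 * ‖xn - xc‖ ^ 2
      ≤ 1/2 * ‖xc - xs‖ ^ 2 + 1/4 * ‖xc - xp‖ ^ 2 + γc * (1 + γc / γp) * Pp ∧
    1/2 * ‖xn - xs‖ ^ 2
        + 2 * (1/2 * ‖xn - xs‖ ^ 2 + 1/4 * ‖xn - xc‖ ^ 2 + γn * (1 + γn / γc) * Pc)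
        + γn * Pc
      ≤ 1/2 * ‖xc - xs‖ ^ 2
        + 2 * (1/2 * ‖xc - xs‖ ^ 2 + 1/4 * ‖xc - xp‖ ^ 2 + γc * (1 + γc / γp) * Pp) := by
  set d := xn - xc
  have hcs := real_inner_le_norm w d
  have hdw := norm_le_of_sq_le_inner hmono
  have hxs : ‖xc - xs‖ ^ 2 = ‖xn - xs‖ ^ 2 - 2 * ⟪d, xn - xs⟫ + ‖d‖ ^ 2 := by
    rw [show xc - xs = (xn - xs) - d by simp only [d]; abel, norm_sub_sq_real, real_inner_comm]
  have hcoef : γn / γc * γn ≤ γc * (1 + γc / γp) := by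
    rw [div_mul_eq_mul_div, div_le_iff₀ hγc]; nlinarith
  -- the slack of the descent is `‖d - 2 • w‖² = ‖d‖² - 4⟪w, d⟫ + 4‖w‖²`
  have he : ‖d‖ ^ 2 ≤ ‖d‖ ^ 2 - 4 * ⟪w, d⟫ + 4 * ‖w‖ ^ 2 := by nlinarith [norm_nonneg d]
  have hB : ⟪w, d⟫ - ‖d‖ ^ 2 / 2 ≤ (‖d‖ ^ 2 - 4 * ⟪w, d⟫ + 4 * ‖w‖ ^ 2) / 2 := by
    nlinarith [norm_nonneg d]
  have hA : 1/2 * ‖xn - xs‖ ^ 2 + 1/4 * ‖d‖ ^ 2 + γn * (1 + γn / γc) * Pc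
        + 1/4 * (‖d‖ ^ 2 - 4 * ⟪w, d⟫ + 4 * ‖w‖ ^ 2)
      ≤ 1/2 * ‖xc - xs‖ ^ 2 + 1/4 * ‖xc - xp‖ ^ 2 + γc * (1 + γc / γp) * Pp := by
    linear_combination hthree + (γn / γc) * hdesc + hw - hxs / 2 + Pp * hcoef
  constructor <;> linarith

end Descent

structure IsAdaPGMSequence {n : ℕ} (f' : En n → En n) (g : En n → EReal) (x : ℕ → En n)
    (γ : ℕ → ℝ) : Prop where
  pos : ∀ k, 0 < γ k
  prox : ∀ k, IsProx (γ (k+1)) g (x k - γ (k+1) • f' (x k)) (x (k+1))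
  rule : ∀ k, γ (k+2)
    ≤ γ (k+1) * adaStep (γ (k+1) / γ k) (deltaEst (γ (k+1)) f' (x k) (x (k+1)))

namespace IsAdaPGMSequence

variable {n : ℕ} {f : En n → ℝ} {f' : En n → En n} {g : En n → EReal}
  {x : ℕ → En n} {γ : ℕ → ℝ} {z : En n}

theorem Ufun_descent (hconv : ConvexOn ℝ Set.univ f) (hgrad : ∀ z, HasGradientAt f (f' z) z)
    (hg : ProperLscConvex g) (hz : IsMinimizer f g z) (hx : IsAdaPGMSequence f' g x γ)
    (k : ℕ) :
    Ufun f g z x γ (k+2) + 1/4 * ‖x (k+3) - x (k+2)‖ ^ 2 ≤ Ufun f g z x γ (k+1) ∧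
    1/2 * ‖x (k+3) - z‖ ^ 2 + 2 * Ufun f g z x γ (k+2) + γ (k+3) * Pval f g z (x (k+2))
      ≤ 1/2 * ‖x (k+2) - z‖ ^ 2 + 2 * Ufun f g z x γ (k+1) := by
  set w := (γ (k+3) / γ (k+2)) • (x (k+2) - x (k+1))
    + γ (k+3) • (f' (x (k+1)) - f' (x (k+2))) with hw
  have hdom : ∀ j, g (x (j+1)) ≠ ⊤ := fun j => (hx.prox j).ne_top hg
  obtain ⟨hthree, hdesc, hmono⟩ := pgStep_inequalities (G := fun y => (g y).toReal)
    (s := {y | g y ≠ ⊤}) (hconv.add_inner_le_of_hasGradientAt hgrad) (hx.pos (k+2))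
    (hx.pos (k+3)) (fun y hy => (hx.prox (k+1)).inner_le hg (hx.pos (k+2)) hy)
    (fun y hy => (hx.prox (k+2)).inner_le hg (hx.pos (k+3)) hy)
    (hdom k) (hdom (k+1)) (hdom (k+2)) (hz.ne_top hg) hw
  have hδ := hconv.inner_bound_of_sq_mul_deltaEst_le hgrad (hx.pos (k+2))
    (sq_mul_le_of_le_mul_adaStep (hx.pos (k+3)).le (hx.rule (k+1)))
  have hstep := sq_le_of_le_mul_adaStep (hx.pos (k+2)).le (hx.pos (k+3)).le
    (by have := div_pos (hx.pos (k+2)) (hx.pos (k+1)); linarith) (hx.rule (k+1))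
  exact lyapunov_descent (hx.pos (k+2)) (hx.pos (k+3)) (hz.Pval_nonneg hg (hdom k)) hthree
    (by unfold Pval phiR; linarith) hmono (norm_sq_sub_inner_le (hx.pos (k+2)) hδ) hstep

theorem le_Ufun (hg : ProperLscConvex g) (hz : IsMinimizer f g z)
    (hx : IsAdaPGMSequence f' g x γ) (k : ℕ) :
    1/2 * ‖x (k+2) - z‖ ^ 2 + 1/4 * ‖x (k+2) - x (k+1)‖ ^ 2 ≤ Ufun f g z x γ (k+1) := by
  have hP := hz.Pval_nonneg hg ((hx.prox k).ne_top hg)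
  have hγ₁ := hx.pos (k+1)
  have hγ₂ := hx.pos (k+2)
  unfold Ufun
  have : 0 ≤ γ (k+2) * (1 + γ (k+2) / γ (k+1)) * Pval f g z (x (k+1)) := by positivity
  linarith

theorem Ufun_nonneg (hg : ProperLscConvex g) (hz : IsMinimizer f g z)
    (hx : IsAdaPGMSequence f' g x γ) (k : ℕ) : 0 ≤ Ufun f g z x γ (k+1) := by
  linarith [hx.le_Ufun hg hz k, sq_nonneg ‖x (k+2) - z‖, sq_nonneg ‖x (k+2) - x (k+1)‖]

theorem Ufun_antitone (hconv : ConvexOn ℝ Set.univ f) (hgrad : ∀ z, HasGradientAt f (f' z) z)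
    (hg : ProperLscConvex g) (hz : IsMinimizer f g z) (hx : IsAdaPGMSequence f' g x γ) :
    Antitone fun k => Ufun f g z x γ (k+1) :=
  antitone_nat_of_succ_le fun k => by
    linarith [(hx.Ufun_descent hconv hgrad hg hz k).1, sq_nonneg ‖x (k+3) - x (k+2)‖]

theorem tendsto_sq_norm_sub_zero (hconv : ConvexOn ℝ Set.univ f)
    (hgrad : ∀ z, HasGradientAt f (f' z) z) (hg : ProperLscConvex g) (hz : IsMinimizer f g z)
    (hx : IsAdaPGMSequence f' g x γ) :
    Tendsto (fun k => ‖x (k+2) - x (k+1)‖ ^ 2) atTop (𝓝 0) := by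
  have : Summable fun k => ‖x (k+3) - x (k+2)‖ ^ 2 :=
    summable_of_add_le (u := fun k => 4 * Ufun f g z x γ (k+1))
      (fun k => by linarith [hx.Ufun_nonneg hg hz k]) (fun k => by positivity)
      (fun k => by linarith [(hx.Ufun_descent hconv hgrad hg hz k).1])
  exact (tendsto_add_atTop_iff_nat 1).1 this.tendsto_atTop_zero

theorem summable_mul_Pval (hconv : ConvexOn ℝ Set.univ f)
    (hgrad : ∀ z, HasGradientAt f (f' z) z) (hg : ProperLscConvex g) (hz : IsMinimizer f g z)
    (hx : IsAdaPGMSequence f' g x γ) :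
    Summable fun k => γ (k+3) * Pval f g z (x (k+2)) :=
  summable_of_add_le (u := fun k => 1/2 * ‖x (k+2) - z‖ ^ 2 + 2 * Ufun f g z x γ (k+1))
    (fun k => by linarith [hx.Ufun_nonneg hg hz k, sq_nonneg ‖x (k+2) - z‖])
    (fun k => mul_nonneg (hx.pos _).le (hz.Pval_nonneg hg ((hx.prox _).ne_top hg)))
    (fun k => (hx.Ufun_descent hconv hgrad hg hz k).2)

theorem isBounded_range (hconv : ConvexOn ℝ Set.univ f)
    (hgrad : ∀ z, HasGradientAt f (f' z) z) (hg : ProperLscConvex g) (hz : IsMinimizer f g z)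
    (hx : IsAdaPGMSequence f' g x γ) : Bornology.IsBounded (Set.range x) := by
  refine ((Set.toFinite {x 0, x 1}).isBounded.union
    (Metric.isBounded_closedBall (x := z) (r := √(2 * Ufun f g z x γ 1)))).subset ?_
  rintro _ ⟨k, rfl⟩
  match k with
  | 0 => simp
  | 1 => simp
  | k + 2 =>
    refine Or.inr (mem_closedBall_iff_norm.2 (Real.le_sqrt_of_sq_le ?_))
    linarith [hx.le_Ufun hg hz k, hx.Ufun_antitone hconv hgrad hg hz (Nat.zero_le k),
      sq_nonneg ‖x (k+2) - x (k+1)‖]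

theorem tendsto_Ufun_coef_mul_Pval (hconv : ConvexOn ℝ Set.univ f)
    (hgrad : ∀ z, HasGradientAt f (f' z) z) (hg : ProperLscConvex g) (hz : IsMinimizer f g z)
    (hx : IsAdaPGMSequence f' g x γ) :
    Tendsto (fun k => γ (k+2) * (1 + γ (k+2) / γ (k+1)) * Pval f g z (x (k+1))) atTop (𝓝 0) := by
  set M := max (γ 1 / γ 0) 2
  have hγP : Tendsto (fun k => γ (k+2) * Pval f g z (x (k+1))) atTop (𝓝 0) :=
    (tendsto_add_atTop_iff_nat 1).1 (hx.summable_mul_Pval hconv hgrad hg hz).tendsto_atTop_zero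
  have hlim : Tendsto (fun k => (1 + M) * (γ (k+2) * Pval f g z (x (k+1)))) atTop (𝓝 0) := by
    simpa using hγP.const_mul (1 + M)
  refine squeeze_zero (fun k => ?_) (fun k => ?_) hlim
  · have := hx.pos (k+1)
    have := hx.pos (k+2)
    have := hz.Pval_nonneg hg ((hx.prox k).ne_top hg)
    positivity
  · rw [mul_comm (γ (k+2)), mul_assoc]
    exact mul_le_mul_of_nonneg_right
      (by linarith [div_le_max_of_le_mul_adaStep hx.pos hx.rule (k+1)])
      (mul_nonneg (hx.pos _).le (hz.Pval_nonneg hg ((hx.prox k).ne_top hg)))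

theorem tendsto_Pval_zero (hconv : ConvexOn ℝ Set.univ f)
    (hgrad : ∀ z, HasGradientAt f (f' z) z) (hg : ProperLscConvex g) (hz : IsMinimizer f g z)
    (hx : IsAdaPGMSequence f' g x γ) {c : ℝ} (hc : 0 < c) (hcγ : ∀ k, c ≤ γ k) :
    Tendsto (fun k => Pval f g z (x (k+2))) atTop (𝓝 0) := by
  refine squeeze_zero (fun k => hz.Pval_nonneg hg ((hx.prox _).ne_top hg)) (fun k => ?_)
    (by simpa using
      (hx.summable_mul_Pval hconv hgrad hg hz).tendsto_atTop_zero.const_mul c⁻¹)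
  rw [← div_eq_inv_mul, le_div_iff₀ hc, mul_comm]
  exact mul_le_mul_of_nonneg_right (hcγ _) (hz.Pval_nonneg hg ((hx.prox _).ne_top hg))

theorem tendsto_of_tendsto_Ufun (hg : ProperLscConvex g) (hz : IsMinimizer f g z)
    (hx : IsAdaPGMSequence f' g x γ) (hU : Tendsto (fun k => Ufun f g z x γ (k+1)) atTop (𝓝 0)) :
    Tendsto x atTop (𝓝 z) := by
  have hsq : Tendsto (fun k => ‖x (k+2) - z‖ ^ 2) atTop (𝓝 0) :=
    squeeze_zero (fun _ => sq_nonneg _)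
      (fun k => show _ ≤ 2 * Ufun f g z x γ (k+1) by
        linarith [hx.le_Ufun hg hz k, sq_nonneg ‖x (k+2) - x (k+1)‖])
      (by simpa using hU.const_mul 2)
  rw [← tendsto_add_atTop_iff_nat 2, tendsto_iff_norm_sub_tendsto_zero]
  simpa using hsq.sqrt

theorem tendsto_isMinimizer (hconv : ConvexOn ℝ Set.univ f)
    (hgrad : ∀ z, HasGradientAt f (f' z) z) (hg : ProperLscConvex g)
    (hargmin : ∃ z, IsMinimizer f g z) (hx : IsAdaPGMSequence f' g x γ)
    (hlb : ∃ c, 0 < c ∧ ∀ k, c ≤ γ k) :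
    ∃ a, IsMinimizer f g a ∧ Tendsto x atTop (𝓝 a) := by
  obtain ⟨z, hz⟩ := hargmin
  obtain ⟨c, hc, hcγ⟩ := hlb
  obtain ⟨a, -, ψ, hψ, hlim⟩ := tendsto_subseq_of_bounded (x := fun k => x (k+2))
    (hx.isBounded_range hconv hgrad hg hz) fun k => Set.mem_range_self _
  have ha : IsMinimizer f g a :=
    isMinimizer_of_tendsto hg (continuous_iff_continuousAt.2 fun w => (hgrad w).continuousAt) hz
      (fun j => (hx.prox _).ne_top hg) hlim
      ((hx.tendsto_Pval_zero hconv hgrad hg hz hc hcγ).comp hψ.tendsto_atTop)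
  have hsub : Tendsto (fun j => Ufun f g a x γ (ψ j + 1)) atTop (𝓝 0) := by
    have h1 : Tendsto (fun j => ‖x (ψ j + 2) - a‖ ^ 2) atTop (𝓝 0) := by
      simpa using (tendsto_iff_norm_sub_tendsto_zero.1 hlim).pow 2
    have h2 := (hx.tendsto_sq_norm_sub_zero hconv hgrad hg ha).comp hψ.tendsto_atTop
    have h3 := (hx.tendsto_Ufun_coef_mul_Pval hconv hgrad hg ha).comp hψ.tendsto_atTop
    have := ((h1.const_mul (1/2)).add (h2.const_mul (1/4))).add h3
    simp only [mul_zero, add_zero] at this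
    exact this
  exact ⟨a, ha, hx.tendsto_of_tendsto_Ufun hg ha <|
    (tendsto_iff_tendsto_subseq_of_antitone (hx.Ufun_antitone hconv hgrad hg ha)
      hψ.tendsto_atTop).2 hsub⟩

theorem of_eq (hγ0 : 0 < γ 0) (hγ01 : γ 0 ≤ γ 1)
    (hprox : ∀ k, IsProx (γ (k+1)) g (x k - γ (k+1) • f' (x k)) (x (k+1)))
    (hrule : ∀ k, γ (k+2)
      = γ (k+1) * adaStep (γ (k+1) / γ k) (deltaEst (γ (k+1)) f' (x k) (x (k+1)))) :
    IsAdaPGMSequence f' g x γ := by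
  have hpos : ∀ k, 0 < γ k ∧ 0 < γ (k+1) := by
    intro k
    induction k with
    | zero => exact ⟨hγ0, hγ0.trans_le hγ01⟩
    | succ k ih =>
      refine ⟨ih.2, ?_⟩
      rw [hrule k]
      exact mul_pos ih.2 (adaStep_pos (by linarith [div_pos ih.2 ih.1]) _)
  exact ⟨fun k => (hpos k).1, hprox, fun k => (hrule k).le⟩

theorem exists_pos_forall_le_of_eq (hconv : ConvexOn ℝ Set.univ f)
    (hgrad : ∀ z, HasGradientAt f (f' z) z) (hlip : LocallyLipschitz f')
    (hg : ProperLscConvex g) (hz : IsMinimizer f g z) (hx : IsAdaPGMSequence f' g x γ)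
    (hrule : ∀ k, γ (k+2)
      = γ (k+1) * adaStep (γ (k+1) / γ k) (deltaEst (γ (k+1)) f' (x k) (x (k+1)))) :
    ∃ c, 0 < c ∧ ∀ k, c ≤ γ k := by
  obtain ⟨K, hK⟩ := hlip.locallyLipschitzOn.exists_lipschitzOnWith_of_compact
    (hx.isBounded_range hconv hgrad hg hz).isCompact_closure
  set L : ℝ := K + 1
  have hL : 0 < L := by positivity
  have hLip : ∀ k, ‖f' (x k) - f' (x (k+1))‖ ≤ L * ‖x k - x (k+1)‖ := fun k => by
    have := hK.dist_le_mul _ (subset_closure (Set.mem_range_self k)) _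
      (subset_closure (Set.mem_range_self (k+1)))
    rw [dist_eq_norm, dist_eq_norm] at this
    nlinarith [norm_nonneg (x k - x (k+1))]
  have hlow : ∀ k, min (γ 1) (1 / (2 * L)) ≤ γ (k+1) := by
    intro k
    induction k with
    | zero => exact min_le_left _ _
    | succ k ih =>
      calc min (γ 1) (1 / (2 * L)) ≤ min (γ (k+1)) (1 / (2 * L)) := le_min ih (min_le_right _ _)
        _ ≤ γ (k+1) * adaStep (γ (k+1) / γ k) (deltaEst (γ (k+1)) f' (x k) (x (k+1))) :=
          min_le_mul_adaStep (div_pos (hx.pos _) (hx.pos _)).le (hx.pos _) hL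
            (deltaEst_le_of_norm_le (hx.pos _).le (hconv.inner_sub_gradient_nonneg hgrad _ _)
              (hLip k))
        _ = γ (k+2) := (hrule k).symm
  have h0 := hx.pos 0
  have h1 := hx.pos 1
  refine ⟨min (γ 0) (min (γ 1) (1 / (2 * L))), by positivity, fun k => ?_⟩
  cases k with
  | zero => exact min_le_left _ _
  | succ k => exact (min_le_right _ _).trans (hlow k)

end IsAdaPGMSequence

/-- Lean's `x (k+1)`, `γ (k+1)` are the paper's `x^k`, `γ_k`. -/
theorem adaPGM_convergence {n : ℕ}
    (f : En n → ℝ) (f' : En n → En n) (g : En n → EReal)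
    (hconv : ConvexOn ℝ Set.univ f)
    (hgrad : ∀ z, HasGradientAt f (f' z) z)
    (hlip : LocallyLipschitz f')
    (hg : ProperLscConvex g)
    (hargmin : ∃ z, ∀ w, (f z : EReal) + g z ≤ (f w : EReal) + g w) :
    (∀ (x : ℕ → En n) (γ : ℕ → ℝ), 0 < γ 0 → γ 0 ≤ γ 1 →
        (∀ k, IsProx (γ (k+1)) g (x k - γ (k+1) • f' (x k)) (x (k+1))) →
        (∀ k, γ (k+2)
          = γ (k+1) * adaStep (γ (k+1) / γ k) (deltaEst (γ (k+1)) f' (x k) (x (k+1)))) →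
        ∃ xh : En n, (∀ w, (f xh : EReal) + g xh ≤ (f w : EReal) + g w) ∧
          Tendsto x atTop (nhds xh))
    ∧ (∀ (x : ℕ → En n) (γ : ℕ → ℝ), (∀ k, 0 < γ k) →
        (∀ k, IsProx (γ (k+1)) g (x k - γ (k+1) • f' (x k)) (x (k+1))) →
        (∀ k, γ (k+2)
          ≤ γ (k+1) * adaStep (γ (k+1) / γ k) (deltaEst (γ (k+1)) f' (x k) (x (k+1)))) →
        (∃ c : ℝ, 0 < c ∧ ∀ k, c ≤ γ k) →
        ∃ xh : En n, (∀ w, (f xh : EReal) + g xh ≤ (f w : EReal) + g w) ∧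
          Tendsto x atTop (nhds xh)) := by
  refine ⟨fun x γ hγ0 hγ01 hprox hrule => ?_, fun x γ hγ hprox hrule hlb => ?_⟩
  · have hx := IsAdaPGMSequence.of_eq hγ0 hγ01 hprox hrule
    obtain ⟨z, hz⟩ := hargmin
    exact hx.tendsto_isMinimizer hconv hgrad hg ⟨z, hz⟩
      (hx.exists_pos_forall_le_of_eq hconv hgrad hlip hg hz hrule)
  · exact IsAdaPGMSequence.tendsto_isMinimizer hconv hgrad hg hargmin ⟨hγ, hprox, hrule⟩ hlb
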